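/- arXiv:2507.12052 — 4 statements merged into one kernel-verified Lean document; each statement's English description precedes it below -/
import Mathlib

section
/- If A is a totally unimodular matrix (every square subdeterminant is 0, 1 or −1) and b is an integral vector, then every vertex of the polyhedron P = {x : Ax ≤ b, x ≥ 0} is integral. -/
/-! At a vertex `x` of `{x | A x ≤ b}` the rows of `A` that are tight at `x` have no common
nonzero kernel vector `v`: otherwise `x ± ε v` would stay in the polyhedron for small `ε`. Hence
some of these rows form an invertible square submatrix `M` of `A` with `M x` integral. Total
unimodularity makes `M` an integer matrix of determinant `±1`, so `x = M⁻¹ (M x)` is integral.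
The constraint `x ≥ 0` is the block `-1` stacked below `A`, which keeps it totally unimodular. -/

open Matrix Filter Topology

lemma eventually_add_mul_le {a b c : ℝ} (hab : a ≤ b) (hc : a = b → c = 0) :
    ∀ᶠ ε in 𝓝 0, a + ε * c ≤ b := by
  rcases hab.eq_or_lt with rfl | hlt
  · simp [hc rfl]
  · have hcont : Tendsto (fun ε : ℝ => a + ε * c) (𝓝 0) (𝓝 a) := by
      simpa using (by fun_prop : Continuous fun ε : ℝ => a + ε * c).tendsto 0
    exact (hcont.eventually_lt_const hlt).mono fun _ => le_of_lt

lemma eq_zero_of_mem_extremePoints_setOf_mulVec_le {ι κ : Type*} [Finite ι] [Fintype κ]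
    {A : Matrix ι κ ℝ} {b : ι → ℝ} {x : κ → ℝ}
    (hx : x ∈ Set.extremePoints ℝ {x | A *ᵥ x ≤ b}) {v : κ → ℝ}
    (hv : ∀ i, (A *ᵥ x) i = b i → (A *ᵥ v) i = 0) : v = 0 := by
  have hline : ∀ w : κ → ℝ, (∀ i, (A *ᵥ x) i = b i → (A *ᵥ w) i = 0) →
      ∀ᶠ ε in 𝓝 (0 : ℝ), x + ε • w ∈ {x | A *ᵥ x ≤ b} := fun w hw => by
    simp only [Set.mem_ofPred_eq, mulVec_add, mulVec_smul, Pi.le_def, Pi.add_apply,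
      Pi.smul_apply, smul_eq_mul]
    exact eventually_all.2 fun i => eventually_add_mul_le (hx.1 i) (hw i)
  have hv' : ∀ i, (A *ᵥ x) i = b i → (A *ᵥ -v) i = 0 := fun i hi => by
    simp [mulVec_neg, hv i hi]
  obtain ⟨ε, ⟨hplus, hminus⟩, hε⟩ :=
    ((((hline v hv).and (hline (-v) hv')).filter_mono nhdsWithin_le_nhds).and
      (self_mem_nhdsWithin (s := {0}ᶜ))).exists
  rw [smul_neg, ← sub_eq_add_neg] at hminus
  have hεv : x + ε • v = x := hx.2 hplus hminus (mem_openSegment_add_sub x (ε • v))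
  simpa [show ε ≠ 0 from hε] using hεv

theorem Matrix.exists_isUnit_submatrix_of_injective_mulVec {ι κ K : Type*} [Fintype ι]
    [Fintype κ] [DecidableEq κ] [Field K] (B : Matrix ι κ K)
    (hB : Function.Injective B.mulVec) :
    ∃ f : κ → ι, IsUnit (B.submatrix f id) := by
  obtain ⟨κ', a, ha, hspan, hli⟩ := exists_linearIndependent' K B.row
  have : Finite κ' := Finite.of_injective a ha
  have : Fintype κ' := Fintype.ofFinite κ'
  have hrank : B.rank = Fintype.card κ := by
    rw [Matrix.rank, LinearMap.finrank_range_of_inj hB, Module.finrank_fintype_fun_eq_card]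
  have hcard : Fintype.card κ = Fintype.card κ' := by
    rw [linearIndependent_iff_card_eq_finrank_span.1 hli, Set.finrank, hspan,
      ← rank_eq_finrank_span_row, hrank]
  let e := Fintype.equivOfCardEq hcard
  exact ⟨a ∘ e, linearIndependent_rows_iff_isUnit.1 (hli.comp e e.injective)⟩

theorem Matrix.IsTotallyUnimodular.exists_eq_map_intCast {m n R : Type*} [CommRing R]
    {A : Matrix m n R} (hA : A.IsTotallyUnimodular) :
    ∃ N : Matrix m n ℤ, A = N.map Int.cast := by
  choose s hs using hA.apply
  exact ⟨of fun i j => (s i j : ℤ), by ext i j; simp [← hs]⟩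

theorem Matrix.IsTotallyUnimodular.exists_isUnit_det_eq_map_intCast {κ R : Type*} [Fintype κ]
    [DecidableEq κ] [CommRing R] [CharZero R] {M : Matrix κ κ R} (hM : M.IsTotallyUnimodular)
    (hunit : IsUnit M) : ∃ N : Matrix κ κ ℤ, IsUnit N.det ∧ M = N.map Int.cast := by
  obtain ⟨s, hs⟩ := (isTotallyUnimodular_iff_fintype M).1 hM κ id id
  have hne : M.det ≠ 0 := ((isUnit_iff_isUnit_det _).1 hunit).ne_zero
  obtain ⟨N, rfl⟩ := hM.exists_eq_map_intCast
  refine ⟨N, ?_, rfl⟩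
  have hdet : (N.map Int.cast).det = (N.det : R) := ((Int.castRingHom R).map_det N).symm
  rw [submatrix_id_id] at hs
  rw [hdet] at hs hne
  rw [Int.isUnit_iff]
  rcases s with _ | _ | _ <;>
    simp only [SignType.zero_eq_zero, SignType.neg_eq_neg_one, SignType.pos_eq_one,
      SignType.coe_zero, SignType.coe_neg_one, SignType.coe_one] at hs
  · exact absurd (by exact_mod_cast hs.symm) hne
  · exact Or.inr (by exact_mod_cast hs.symm)
  · exact Or.inl (by exact_mod_cast hs.symm)

theorem Matrix.exists_eq_intCast_of_mulVec_eq_intCast {κ R : Type*} [Fintype κ] [DecidableEq κ]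
    [CommRing R] {N : Matrix κ κ ℤ} (hN : IsUnit N.det) {x : κ → R}
    (hx : ∀ i, ∃ z : ℤ, (N.map Int.cast *ᵥ x) i = z) : ∀ j, ∃ z : ℤ, x j = z := by
  choose d hd using hx
  have hxd : N.map Int.cast *ᵥ x = Int.cast ∘ d := funext hd
  refine fun j => ⟨(N⁻¹ *ᵥ d) j, ?_⟩
  calc x j = ((N⁻¹ * N).map (Int.castRingHom R) *ᵥ x) j := by
        rw [nonsing_inv_mul N hN, Matrix.map_one _ (map_zero _) (map_one _), one_mulVec]
    _ = (N⁻¹.map (Int.castRingHom R) *ᵥ (Int.cast ∘ d)) j := by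
        rw [Matrix.map_mul, ← mulVec_mulVec, ← hxd]; rfl
    _ = (N⁻¹ *ᵥ d) j := (RingHom.map_mulVec _ _ _ _).symm

theorem Matrix.IsTotallyUnimodular.fromRows_neg_one {m n R : Type*} [CommRing R] [DecidableEq n]
    {A : Matrix m n R} (hA : A.IsTotallyUnimodular) :
    (fromRows A (-1 : Matrix n n R)).IsTotallyUnimodular :=
  hA.fromRows_unitlike fun _ i =>
    ⟨i, -1, funext fun j => by simp [one_apply, Pi.single_apply, eq_comm, neg_ite]⟩

theorem Matrix.IsTotallyUnimodular.exists_eq_intCast_of_mem_extremePoints {ι κ : Type*}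
    [Fintype ι] [Fintype κ] [DecidableEq κ] {A : Matrix ι κ ℝ} (hA : A.IsTotallyUnimodular)
    {b : ι → ℝ} (hb : ∀ i, ∃ z : ℤ, b i = z) {x : κ → ℝ}
    (hx : x ∈ Set.extremePoints ℝ {x | A *ᵥ x ≤ b}) :
    ∀ j, ∃ z : ℤ, x j = z := by
  let tight := {i // (A *ᵥ x) i = b i}
  have hinj : Function.Injective (A.submatrix (Subtype.val : tight → ι) id).mulVec := by
    intro v w hvw
    refine sub_eq_zero.1 (eq_zero_of_mem_extremePoints_setOf_mulVec_le hx fun i hi => ?_)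
    rw [mulVec_sub, Pi.sub_apply, sub_eq_zero]
    exact congrFun hvw ⟨i, hi⟩
  obtain ⟨f, hunit⟩ := exists_isUnit_submatrix_of_injective_mulVec _ hinj
  obtain ⟨N, hN, hAN⟩ :=
    (hA.submatrix (Subtype.val ∘ f) id).exists_isUnit_det_eq_map_intCast hunit
  refine exists_eq_intCast_of_mulVec_eq_intCast hN fun k => ?_
  obtain ⟨z, hz⟩ := hb (f k)
  rw [← hAN]
  exact ⟨z, (f k).2.trans hz⟩

/-- If `A` is totally unimodular and `b` is integral, then every vertex (extreme point)
of the polyhedron `{x : A x ≤ b, x ≥ 0}` is integral. -/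
theorem stmt4 (m n : ℕ) (A : Matrix (Fin m) (Fin n) ℝ) (hA : A.IsTotallyUnimodular)
    (b : Fin m → ℝ) (hb : ∀ i, ∃ z : ℤ, b i = (z : ℝ)) :
    ∀ x ∈ Set.extremePoints ℝ {x : Fin n → ℝ | A.mulVec x ≤ b ∧ 0 ≤ x},
      ∀ i, ∃ z : ℤ, x i = (z : ℝ) := by
  have hP : {x : Fin n → ℝ | A.mulVec x ≤ b ∧ 0 ≤ x} =
      {x | fromRows A (-1 : Matrix (Fin n) (Fin n) ℝ) *ᵥ x ≤ Sum.elim b 0} := by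
    ext x
    simp [fromRows_mulVec, Sum.elim_le_elim_iff, neg_mulVec]
  intro x hx
  rw [hP] at hx
  refine hA.fromRows_neg_one.exists_eq_intCast_of_mem_extremePoints ?_ hx
  rintro (i | j)
  · exact hb i
  · exact ⟨0, by simp⟩
end

section
/- Suppose (Ā, C̄_S) is detectable and there exists a nonzero undetectable attack a(·) with support contained in the normal agents N = V ∖ S, i.e., two state trajectories x¹(k) = Ā^k x¹(0) + (forced terms) and x²(k) with identical forced terms such that C̄x¹(k) + V(φ)a(k) = C̄x²(k) for all k. Then a contradiction arises: the difference d = x²(0) − x¹(0) satisfies C̄_S Ā^k d = 0 for all k yet Ā^k d ↛ 0, contradicting detectability. Hence if (Ā, C̄_S) is detectable, no undetectable attack exists. -/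
open Matrix Filter

/-- If `(Ā, C̄_S)` is detectable (every difference invisible to the secure outputs along the
free dynamics decays to zero), then no undetectable attack supported on the normal agents
exists. -/
theorem stmt15 (q p : ℕ) (Ab : Matrix (Fin q) (Fin q) ℝ) (C : Matrix (Fin p) (Fin q) ℝ)
    (Sec : Finset (Fin p))
    (hdet : ∀ d : Fin q → ℝ,
      (∀ k : ℕ, ∀ i ∈ Sec, C.mulVec ((Ab ^ k).mulVec d) i = 0) →
      Tendsto (fun k : ℕ => (Ab ^ k).mulVec d) atTop (nhds 0)) :
    ¬ ∃ (x1 x2 f : ℕ → Fin q → ℝ) (a : ℕ → Fin p → ℝ),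
        (∀ k, x1 (k + 1) = Ab.mulVec (x1 k) + f k) ∧
        (∀ k, x2 (k + 1) = Ab.mulVec (x2 k) + f k) ∧
        (∀ k, ∀ i ∈ Sec, a k i = 0) ∧
        (∀ k, C.mulVec (x1 k) + a k = C.mulVec (x2 k)) ∧
        ¬ Tendsto (fun k : ℕ => x1 k - x2 k) atTop (nhds 0) := by
  rintro ⟨x1, x2, f, a, h1, h2, ha, hout, hnot⟩
  set d : Fin q → ℝ := x1 0 - x2 0 with hd
  have hdiff : ∀ k, x1 k - x2 k = (Ab ^ k).mulVec d := by
    intro k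
    induction k with
    | zero => simp [hd]
    | succ n ih =>
      rw [h1 n, h2 n]
      have : Ab.mulVec (x1 n) + f n - (Ab.mulVec (x2 n) + f n)
          = Ab.mulVec (x1 n - x2 n) := by
        rw [Matrix.mulVec_sub]; abel
      rw [this, ih, pow_succ', ← Matrix.mulVec_mulVec]
  have hsec : ∀ k : ℕ, ∀ i ∈ Sec, C.mulVec ((Ab ^ k).mulVec d) i = 0 := by
    intro k i hi
    have h := congrFun (hout k) i
    have hz := ha k i hi
    have : C.mulVec (x1 k - x2 k) i = 0 := by
      rw [Matrix.mulVec_sub]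
      simp only [Pi.add_apply, Pi.sub_apply] at h ⊢
      rw [hz] at h
      linarith
    rwa [hdiff k] at this
  have := hdet d hsec
  apply hnot
  simpa [hdiff] using this
end

section
/- Let Ā ∈ ℝ^{q×q} and suppose v̄ ∈ ℝ^q (or ℂ^q) is an eigenvector of Ā with eigenvalue λ, |λ| ≥ 1, satisfying C̄_S v̄ = 0. Then the attack sequence a(k) defined (on normal blocks) by V(φ)a(k) = −C̄ Ā^k v̄ = −λ^k C̄ v̄ produces outputs from initial state x¹(0) = v̄ (with attack) identical to the outputs from initial state x²(0) = 0 (without attack), for any common input and noise realization; i.e., an undetectable attack exists. -/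
open Matrix

/-- An eigenvector `v̄` of `Ā` with `|λ| ≥ 1` and `C̄_S v̄ = 0` yields an undetectable attack:
the attack `a(k) = -λ^k C̄ v̄` is supported on the normal agents only, and the attacked outputs
from `x¹(0) = v̄` coincide with the unattacked outputs from `x²(0) = 0` for any common input
and noise realization. -/
theorem stmt16 (q p mI : ℕ) (Ab : Matrix (Fin q) (Fin q) ℝ) (C : Matrix (Fin p) (Fin q) ℝ)
    (Sec : Finset (Fin p)) (vbar : Fin q → ℝ) (lam : ℝ)
    (hv : vbar ≠ 0) (heig : Ab.mulVec vbar = lam • vbar) (hlam : 1 ≤ |lam|)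
    (hCs : ∀ i ∈ Sec, C.mulVec vbar i = 0)
    (Bb : Matrix (Fin q) (Fin mI) ℝ) (u : ℕ → Fin mI → ℝ)
    (w : ℕ → Fin q → ℝ) (vn : ℕ → Fin p → ℝ)
    (x1 x2 : ℕ → Fin q → ℝ)
    (hx10 : x1 0 = vbar) (hx20 : x2 0 = 0)
    (hx1 : ∀ k, x1 (k + 1) = Ab.mulVec (x1 k) + Bb.mulVec (u k) + w k)
    (hx2 : ∀ k, x2 (k + 1) = Ab.mulVec (x2 k) + Bb.mulVec (u k) + w k) :
    (∀ k : ℕ, ∀ i ∈ Sec, (-(lam ^ k) • C.mulVec vbar) i = 0) ∧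
    (∀ k : ℕ, C.mulVec (x1 k) + vn k + (-(lam ^ k) • C.mulVec vbar) =
      C.mulVec (x2 k) + vn k) := by
  have key : ∀ k : ℕ, x1 k = x2 k + (lam ^ k) • vbar := by
    intro k
    induction k with
    | zero => simp [hx10, hx20]
    | succ n ih =>
      rw [hx1, hx2, ih]
      have : Ab.mulVec (x2 n + lam ^ n • vbar)
          = Ab.mulVec (x2 n) + lam ^ n • Ab.mulVec vbar := by
        rw [Matrix.mulVec_add, Matrix.mulVec_smul]
      rw [this, heig, smul_smul, pow_succ]
      ring_nf
  constructor
  · intro k i hi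
    simp [hCs i hi]
  · intro k
    rw [key k, Matrix.mulVec_add, Matrix.mulVec_smul]
    module
end

section
/- The security index equals the support-minimization over unobservable eigenvectors: if there exists an eigenvector v̄ of Ā with C̄_S v̄ = 0 (and |eigenvalue| ≥ 1), then the minimum number of normal agents an attacker must compromise to execute an undetectable attack is min over such eigenvectors v̄ of |{ i ∈ N : C_i v̄ ≠ 0 }|, which equals min_{v̄ ∈ eigenvectors of Ā} |{ i ∈ N : C̄_{{i}∪S} v̄ ≠ 0 }|. -/
open Matrix
open scoped Classical

/-- The security index equals the support-minimization over unobservable eigenvectors: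
assuming some eigenvector of `Ā` is invisible to all secure agents, the minimum number of
normal agents whose outputs an undetectable attack must compromise, i.e.
`min over eigenvectors v̄ with C̄_S v̄ = 0 of |{i ∈ N : Cᵢ v̄ ≠ 0}|`, equals
`min over all eigenvectors v̄ of Ā of |{i ∈ N : C̄_{{i}∪S} v̄ ≠ 0}|`. -/
theorem stmt17 (q NN : ℕ) (Ab : Matrix (Fin q) (Fin q) ℝ)
    (p : Fin NN → ℕ) (C : ∀ i : Fin NN, Matrix (Fin (p i)) (Fin q) ℝ)
    (S : Finset (Fin NN))
    (hexists : ∃ (v : Fin q → ℝ) (lam : ℝ), v ≠ 0 ∧ Ab.mulVec v = lam • v ∧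
        ∀ i ∈ S, (C i).mulVec v = 0) :
    sInf {c : ℕ | ∃ (v : Fin q → ℝ) (lam : ℝ), v ≠ 0 ∧ Ab.mulVec v = lam • v ∧
        (∀ i ∈ S, (C i).mulVec v = 0) ∧
        c = (Finset.univ.filter
          (fun i : Fin NN => i ∉ S ∧ (C i).mulVec v ≠ 0)).card} =
    sInf {c : ℕ | ∃ (v : Fin q → ℝ) (lam : ℝ), v ≠ 0 ∧ Ab.mulVec v = lam • v ∧
        c = (Finset.univ.filter
          (fun i : Fin NN => i ∉ S ∧
            ((C i).mulVec v ≠ 0 ∨ ∃ j ∈ S, (C j).mulVec v ≠ 0))).card} := by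
  obtain ⟨v₀, lam₀, hv₀, heig₀, hS₀⟩ := hexists
  have hne₁ : {c : ℕ | ∃ (v : Fin q → ℝ) (lam : ℝ), v ≠ 0 ∧ Ab.mulVec v = lam • v ∧
      (∀ i ∈ S, (C i).mulVec v = 0) ∧
      c = (Finset.univ.filter
        (fun i : Fin NN => i ∉ S ∧ (C i).mulVec v ≠ 0)).card}.Nonempty :=
    ⟨_, v₀, lam₀, hv₀, heig₀, hS₀, rfl⟩
  apply le_antisymm
  · -- sInf₁ ≤ every element of the second set
    apply le_csInf
    · exact ⟨_, v₀, lam₀, hv₀, heig₀, rfl⟩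
    rintro c ⟨v, lam, hv, heig, rfl⟩
    by_cases h : ∀ j ∈ S, (C j).mulVec v = 0
    · have : (Finset.univ.filter
          (fun i : Fin NN => i ∉ S ∧
            ((C i).mulVec v ≠ 0 ∨ ∃ j ∈ S, (C j).mulVec v ≠ 0))).card
          = (Finset.univ.filter
          (fun i : Fin NN => i ∉ S ∧ (C i).mulVec v ≠ 0)).card := by
        congr 1
        apply Finset.filter_congr
        intro i _
        constructor
        · rintro ⟨hiS, hor⟩
          refine ⟨hiS, ?_⟩
          rcases hor with h1 | ⟨j, hj, hj'⟩
          · exact h1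
          · exact absurd (h j hj) hj'
        · rintro ⟨hiS, h1⟩
          exact ⟨hiS, Or.inl h1⟩
      rw [this]
      exact Nat.sInf_le ⟨v, lam, hv, heig, h, rfl⟩
    · -- second filter equals all of Sᶜ
      push_neg at h
      obtain ⟨j, hj, hj'⟩ := h
      have hsub : (Finset.univ.filter
          (fun i : Fin NN => i ∉ S ∧ (C i).mulVec v₀ ≠ 0)).card ≤
          (Finset.univ.filter
          (fun i : Fin NN => i ∉ S ∧
            ((C i).mulVec v ≠ 0 ∨ ∃ j ∈ S, (C j).mulVec v ≠ 0))).card := by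
        apply Finset.card_le_card
        intro i hi
        simp only [Finset.mem_filter] at hi ⊢
        exact ⟨hi.1, hi.2.1, Or.inr ⟨j, hj, hj'⟩⟩
      exact le_trans (Nat.sInf_le ⟨v₀, lam₀, hv₀, heig₀, hS₀, rfl⟩) hsub
  · -- sInf₂ ≤ sInf₁ since set₁ maps into set₂ with equal cardinality
    obtain ⟨v, lam, hv, heig, hS, hc⟩ := Nat.sInf_mem hne₁
    apply Nat.sInf_le
    refine ⟨v, lam, hv, heig, ?_⟩
    rw [hc]
    congr 1
    apply Finset.filter_congr
    intro i _
    constructor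
    · rintro ⟨hiS, h1⟩
      exact ⟨hiS, Or.inl h1⟩
    · rintro ⟨hiS, hor⟩
      refine ⟨hiS, ?_⟩
      rcases hor with h1 | ⟨j, hj, hj'⟩
      · exact h1
      · exact absurd (hS j hj) hj'
end
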